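/- Let X be a complex normed space and let T1, T2 be commuting contractions on X such that each function A_{Ti}(x) = (‖x‖² − ‖Ti x‖²)^{1/2} defines a norm on X (i = 1, 2). Let X1 and X2 be complex normed spaces together with linear bijections j_i : X → X_i satisfying ‖j_i x‖_{X_i} = A_{Ti}(x) for all x ∈ X, and consider the subspaces M̂1 = { (j_1(T2 x), j_2 x) : x ∈ X } and M̂2 = { (j_1 x, j_2(T1 x)) : x ∈ X } of X1 ⊕₂ X2. Suppose there exist subspaces Y1, Y2 of X1 ⊕₂ X2 and a surjective linear isometry between Y1 and Y2 such that X1 ⊕₂ X2 is the internal direct 2-sum of M̂1 and Y1 and also of M̂2 and Y2 (i.e. every element decomposes uniquely as a sum with the squared norm splitting accordingly). Then there exists a surjective linear isometry S on X1 ⊕₂ X2 with S(M̂1) = M̂2, satisfying S(j_1(T2 x), j_2 x) = (j_1 x, j_2(T1 x)) for all x ∈ X; consequently (T1, T2) dilates to a commuting pair of isometries on the normed space X ⊕₂ ℓ²(ℕ, X1 ⊕₂ X2). -/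

import Mathlib

/-!
Write `z = m̂₁ x + y` with `y ∈ Y₁` and send it to `m̂₂ x + U y`. Both `‖m̂₁ x‖²` and `‖m̂₂ x‖²`
equal `‖x‖² - ‖T₁ T₂ x‖²` because `T₁` and `T₂` commute, so the two Pythagorean splittings make
this a surjective isometry `S` with `S ∘ m̂₁ = m̂₂`.

For the dilation let `W₁ (x, h) = (T₁ x, h')`, where `h'` arises from `h` by shifting the
`X₁`-coordinates one slot to the right and writing `j₁ x` into slot `0`; `W₂` does the same with
`T₂`, `j₂` and the `X₂`-coordinates. They are isometries since `‖T x‖² + ‖j x‖² = ‖x‖²`. Both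
`W₁ W₂` and `W₂ W₁` shift the whole sequence by one slot, writing `(j₁ T₂ x, j₂ x)`, resp.
`(j₁ x, j₂ T₁ x)`, into slot `0`; hence `W₁ W₂ Φ = Φ W₂ W₁` for `Φ` acting as `S⁻¹` in every slot,
and `V₁ = W₁ Φ⁻¹`, `V₂ = Φ W₂` are commuting isometries compressing to `T₁` and `T₂` on `X`.
-/

open scoped ENNReal

@[ext]
lemma WithLp.prod_ext {p : ℝ≥0∞} {α β : Type*} {x y : WithLp p (α × β)} (h₁ : x.fst = y.fst)
    (h₂ : x.snd = y.snd) : x = y :=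
  (WithLp.ext_iff p).2 (Prod.ext h₁ h₂)

section TwoSum

variable {𝕜 X K : Type*} [Ring 𝕜] [AddCommGroup X] [Module 𝕜 X]
  [SeminormedAddCommGroup K] [Module 𝕜 K]

theorem exists_linearIsometryEquiv_apply_eq_of_twoSum (m1 m2 : X →ₗ[𝕜] K)
    (hm : ∀ x, ‖m1 x‖ = ‖m2 x‖) {Y1 Y2 : Submodule 𝕜 K} (U : Y1 ≃ₗᵢ[𝕜] Y2)
    (hdec1 : ∀ z : K, ∃! p : X × Y1, m1 p.1 + (p.2 : K) = z)
    (hnorm1 : ∀ (x : X) (y : Y1), ‖m1 x + (y : K)‖ ^ 2 = ‖m1 x‖ ^ 2 + ‖(y : K)‖ ^ 2)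
    (hdec2 : ∀ z : K, ∃! p : X × Y2, m2 p.1 + (p.2 : K) = z)
    (hnorm2 : ∀ (x : X) (y : Y2), ‖m2 x + (y : K)‖ ^ 2 = ‖m2 x‖ ^ 2 + ‖(y : K)‖ ^ 2) :
    ∃ S : K ≃ₗᵢ[𝕜] K, ∀ x, S (m1 x) = m2 x := by
  let e1 := LinearEquiv.ofBijective (m1.coprod Y1.subtype)
    ((Function.bijective_iff_existsUnique _).2 hdec1)
  let e2 := LinearEquiv.ofBijective (m2.coprod Y2.subtype)
    ((Function.bijective_iff_existsUnique _).2 hdec2)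
  let S := e1.symm ≪≫ₗ (LinearEquiv.refl 𝕜 X).prodCongr U.toLinearEquiv ≪≫ₗ e2
  have hS : ∀ p, S (e1 p) = e2 (p.1, U p.2) := fun p => by simp [S]
  refine ⟨{ S with norm_map' := fun z => ?_ }, fun x => ?_⟩
  · obtain ⟨p, rfl⟩ := e1.surjective z
    refine (pow_left_inj₀ (norm_nonneg _) (norm_nonneg _) two_ne_zero).1 ?_
    change ‖S (e1 p)‖ ^ 2 = ‖e1 p‖ ^ 2
    rw [hS]
    simp only [e1, e2, LinearEquiv.ofBijective_apply, LinearMap.coprod_apply,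
      Submodule.subtype_apply, hnorm1, hnorm2, hm]
    rw [show ‖(U p.2 : K)‖ = ‖(p.2 : K)‖ from U.norm_map p.2]
  · have h0 : e1 (x, 0) = m1 x := by simp [e1]
    change S (m1 x) = m2 x
    rw [← h0, hS]
    simp [e2]

end TwoSum

section lpCongr

variable {𝕜 ι : Type*} [NormedField 𝕜] {E F : ι → Type*} [∀ i, NormedAddCommGroup (E i)]
  [∀ i, NormedSpace 𝕜 (E i)] [∀ i, NormedAddCommGroup (F i)] [∀ i, NormedSpace 𝕜 (F i)]
  {p : ℝ≥0∞} [Fact (1 ≤ p)]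

noncomputable def LinearIsometryEquiv.lpCongrRight (e : ∀ i, E i ≃ₗᵢ[𝕜] F i) :
    lp E p ≃ₗᵢ[𝕜] lp F p where
  toFun f := ⟨fun i => e i (f i), (lp.memℓp f).mono' fun i => ((e i).norm_map (f i)).le⟩
  invFun g := ⟨fun i => (e i).symm (g i),
    (lp.memℓp g).mono' fun i => ((e i).symm.norm_map (g i)).le⟩
  map_add' f g := lp.ext <| funext fun i => (e i).map_add (f i) (g i)
  map_smul' c f := lp.ext <| funext fun i => (e i).map_smul c (f i)
  left_inv f := lp.ext <| funext fun i => (e i).symm_apply_apply (f i)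
  right_inv g := lp.ext <| funext fun i => (e i).apply_symm_apply (g i)
  norm_map' f := by
    have hp : p ≠ 0 := (zero_lt_one.trans_le Fact.out).ne'
    exact le_antisymm (lp.norm_mono hp fun i => ((e i).norm_map (f i)).le)
      (lp.norm_mono hp fun i => ((e i).norm_map (f i)).ge)

@[simp]
lemma LinearIsometryEquiv.lpCongrRight_apply (e : ∀ i, E i ≃ₗᵢ[𝕜] F i) (f : lp E p) (i : ι) :
    lpCongrRight e f i = e i (f i) := rfl

@[simp]
lemma LinearIsometryEquiv.lpCongrRight_symm_apply (e : ∀ i, E i ≃ₗᵢ[𝕜] F i) (g : lp F p)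
    (i : ι) : (lpCongrRight e).symm g i = (e i).symm (g i) := rfl

end lpCongr

section SquareSummable

variable {ι : Type*} {E : ι → Type*} [∀ i, NormedAddCommGroup (E i)]

lemma memℓp_two_of_hasSum {f : ∀ i, E i} {s : ℝ} (h : HasSum (fun i => ‖f i‖ ^ 2) s) :
    Memℓp f 2 :=
  memℓp_gen (by simpa using h.summable)

lemma lp.hasSum_norm_sq (f : lp E 2) : HasSum (fun i => ‖f i‖ ^ 2) (‖f‖ ^ 2) := by
  simpa using lp.hasSum_norm (p := 2) (by norm_num) f

variable {P Q : Type*} [SeminormedAddCommGroup P] [SeminormedAddCommGroup Q]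

lemma WithLp.hasSum_norm_sq_fst_snd {f : ι → WithLp 2 (P × Q)} {s : ℝ}
    (h : HasSum (fun i => ‖f i‖ ^ 2) s) :
    ∃ s₁ s₂, HasSum (fun i => ‖(f i).fst‖ ^ 2) s₁ ∧ HasSum (fun i => ‖(f i).snd‖ ^ 2) s₂ ∧
      s₁ + s₂ = s := by
  have h₁ : Summable fun i => ‖(f i).fst‖ ^ 2 := h.summable.of_nonneg_of_le (fun _ => by positivity)
    fun i => by gcongr; exact WithLp.norm_fst_le _ (f i)
  have h₂ : Summable fun i => ‖(f i).snd‖ ^ 2 := h.summable.of_nonneg_of_le (fun _ => by positivity)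
    fun i => by gcongr; exact WithLp.norm_snd_le _ (f i)
  refine ⟨_, _, h₁.hasSum, h₂.hasSum, (h₁.hasSum.add h₂.hasSum).unique ?_⟩
  simpa only [WithLp.prod_norm_sq_eq_of_L2] using h

end SquareSummable

section SeqConsFst

variable {P Q : Type*}

def seqConsFst (a : P) (f : ℕ → WithLp 2 (P × Q)) : ℕ → WithLp 2 (P × Q)
  | 0 => WithLp.toLp 2 (a, (f 0).snd)
  | n + 1 => WithLp.toLp 2 ((f n).fst, (f (n + 1)).snd)

lemma hasSum_norm_sq_seqConsFst [SeminormedAddCommGroup P] [SeminormedAddCommGroup Q]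
    (a : P) {f : ℕ → WithLp 2 (P × Q)} {s : ℝ}
    (hf : HasSum (fun n => ‖f n‖ ^ 2) s) :
    HasSum (fun n => ‖seqConsFst a f n‖ ^ 2) (‖a‖ ^ 2 + s) := by
  obtain ⟨s₁, s₂, h₁, h₂, rfl⟩ := WithLp.hasSum_norm_sq_fst_snd hf
  have hfst : HasSum (fun n => ‖(seqConsFst a f n).fst‖ ^ 2) (‖a‖ ^ 2 + s₁) := HasSum.zero_add h₁
  have hsnd : HasSum (fun n => ‖(seqConsFst a f n).snd‖ ^ 2) s₂ := by
    convert h₂ using 2 with n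
    cases n <;> rfl
  simpa only [WithLp.prod_norm_sq_eq_of_L2, add_assoc] using hfst.add hsnd

end SeqConsFst

section LpCons

variable (𝕜 P Q : Type*) [NormedField 𝕜] [NormedAddCommGroup P] [NormedAddCommGroup Q]
  [NormedSpace 𝕜 P] [NormedSpace 𝕜 Q]

local notation "ℓ²" => lp (fun _ : ℕ => WithLp 2 (P × Q)) 2

noncomputable def lpConsFst : WithLp 2 (P × ℓ²) →ₗᵢ[𝕜] ℓ² where
  toFun z := ⟨seqConsFst z.fst z.snd,
    memℓp_two_of_hasSum (hasSum_norm_sq_seqConsFst z.fst (lp.hasSum_norm_sq z.snd))⟩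
  map_add' z w := lp.ext <| funext fun n => by cases n <;> rfl
  map_smul' c z := lp.ext <| funext fun n => by cases n <;> rfl
  norm_map' z := by
    rw [← pow_left_inj₀ (norm_nonneg _) (norm_nonneg _) two_ne_zero, WithLp.prod_norm_sq_eq_of_L2]
    exact (lp.hasSum_norm_sq _).unique (hasSum_norm_sq_seqConsFst _ (lp.hasSum_norm_sq _))

variable {𝕜 P Q}

@[simp]
lemma lpConsFst_apply_zero_fst (z : WithLp 2 (P × ℓ²)) : (lpConsFst 𝕜 P Q z 0).fst = z.fst := rfl

@[simp]
lemma lpConsFst_apply_succ_fst (z : WithLp 2 (P × ℓ²)) (n : ℕ) :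
    (lpConsFst 𝕜 P Q z (n + 1)).fst = (z.snd n).fst := rfl

@[simp]
lemma lpConsFst_apply_snd (z : WithLp 2 (P × ℓ²)) (n : ℕ) :
    (lpConsFst 𝕜 P Q z n).snd = (z.snd n).snd := by
  cases n <;> rfl

variable (𝕜 P Q)

noncomputable def lpConsSnd : WithLp 2 (Q × ℓ²) →ₗᵢ[𝕜] ℓ² :=
  let swap : ℓ² ≃ₗᵢ[𝕜] lp (fun _ : ℕ => WithLp 2 (Q × P)) 2 :=
    .lpCongrRight fun _ => .withLpProdComm 2 𝕜 P Q
  swap.symm.toLinearIsometry.comp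
    ((lpConsFst 𝕜 Q P).comp (LinearIsometry.withLpProdMap 2 (.id) swap.toLinearIsometry))

variable {𝕜 P Q}

@[simp]
lemma lpConsSnd_apply_fst (z : WithLp 2 (Q × ℓ²)) (n : ℕ) :
    (lpConsSnd 𝕜 P Q z n).fst = (z.snd n).fst := by
  cases n <;> rfl

@[simp]
lemma lpConsSnd_apply_zero_snd (z : WithLp 2 (Q × ℓ²)) : (lpConsSnd 𝕜 P Q z 0).snd = z.fst := rfl

@[simp]
lemma lpConsSnd_apply_succ_snd (z : WithLp 2 (Q × ℓ²)) (n : ℕ) :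
    (lpConsSnd 𝕜 P Q z (n + 1)).snd = (z.snd n).snd := rfl

end LpCons

section Schaffer

variable {𝕜 X R L : Type*} [Semiring 𝕜] [SeminormedAddCommGroup X] [Module 𝕜 X]
  [SeminormedAddCommGroup R] [Module 𝕜 R] [SeminormedAddCommGroup L] [Module 𝕜 L]

noncomputable def schafferIsometry (T : X →ₗ[𝕜] X) (D : X →ₗ[𝕜] R)
    (hD : ∀ x, ‖D x‖ ^ 2 = ‖x‖ ^ 2 - ‖T x‖ ^ 2) (C : WithLp 2 (R × L) →ₗᵢ[𝕜] L) :
    WithLp 2 (X × L) →ₗᵢ[𝕜] WithLp 2 (X × L) where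
  toFun z := WithLp.toLp 2 (T z.fst, C (WithLp.toLp 2 (D z.fst, z.snd)))
  map_add' z w := by
    ext
    · exact T.map_add _ _
    · exact (congrArg C (by ext <;> simp)).trans (C.map_add _ _)
  map_smul' c z := by
    ext
    · exact T.map_smul _ _
    · exact (congrArg C (by ext <;> simp)).trans (C.map_smul _ _)
  norm_map' z := by
    change ‖WithLp.toLp 2 (T z.fst, C (WithLp.toLp 2 (D z.fst, z.snd)))‖ = ‖z‖
    rw [← pow_left_inj₀ (norm_nonneg _) (norm_nonneg _) two_ne_zero]
    simp only [WithLp.prod_norm_sq_eq_of_L2, WithLp.toLp_fst, WithLp.toLp_snd, C.norm_map, hD]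
    ring

variable (T : X →ₗ[𝕜] X) (D : X →ₗ[𝕜] R) (hD : ∀ x, ‖D x‖ ^ 2 = ‖x‖ ^ 2 - ‖T x‖ ^ 2)
  (C : WithLp 2 (R × L) →ₗᵢ[𝕜] L) (z : WithLp 2 (X × L))

@[simp]
lemma schafferIsometry_apply_fst : (schafferIsometry T D hD C z).fst = T z.fst := rfl

@[simp]
lemma schafferIsometry_apply_snd :
    (schafferIsometry T D hD C z).snd = C (WithLp.toLp 2 (D z.fst, z.snd)) := rfl

end Schaffer

lemma ContinuousLinearMap.sq_sqrt_norm_sq_sub_norm_apply_sq {𝕜 X : Type*}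
    [NontriviallyNormedField 𝕜] [SeminormedAddCommGroup X] [NormedSpace 𝕜 X] {T : X →L[𝕜] X}
    (hT : ‖T‖ ≤ 1) (x : X) : √(‖x‖ ^ 2 - ‖T x‖ ^ 2) ^ 2 = ‖x‖ ^ 2 - ‖T x‖ ^ 2 :=
  Real.sq_sqrt <| sub_nonneg.2 <|
    pow_le_pow_left₀ (norm_nonneg _) ((T.le_of_opNorm_le hT x).trans_eq (one_mul _)) 2

lemma norm_toLp_defect_comm {𝕜 X P Q : Type*} [Semiring 𝕜] [SeminormedAddCommGroup X]
    [Module 𝕜 X] [SeminormedAddCommGroup P] [Module 𝕜 P] [SeminormedAddCommGroup Q] [Module 𝕜 Q]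
    (T1 T2 : X →L[𝕜] X) (hcomm : T1 ∘L T2 = T2 ∘L T1)
    (D1 : X →ₗ[𝕜] P) (D2 : X →ₗ[𝕜] Q) (hD1 : ∀ x, ‖D1 x‖ ^ 2 = ‖x‖ ^ 2 - ‖T1 x‖ ^ 2)
    (hD2 : ∀ x, ‖D2 x‖ ^ 2 = ‖x‖ ^ 2 - ‖T2 x‖ ^ 2) (x : X) :
    ‖WithLp.toLp 2 (D1 (T2 x), D2 x)‖ = ‖WithLp.toLp 2 (D1 x, D2 (T1 x))‖ := by
  have hc : T1 (T2 x) = T2 (T1 x) := DFunLike.congr_fun hcomm x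
  rw [← pow_left_inj₀ (norm_nonneg _) (norm_nonneg _) two_ne_zero]
  simp only [WithLp.prod_norm_sq_eq_of_L2, WithLp.toLp_fst, WithLp.toLp_snd, hD1, hD2, hc]
  ring

theorem exists_commuting_isometric_dilation {𝕜 X P Q : Type*} [NormedField 𝕜]
    [NormedAddCommGroup X] [NormedSpace 𝕜 X] [NormedAddCommGroup P] [NormedSpace 𝕜 P]
    [NormedAddCommGroup Q] [NormedSpace 𝕜 Q]
    (T1 T2 : X →L[𝕜] X) (hcomm : T1 ∘L T2 = T2 ∘L T1) (D1 : X →ₗ[𝕜] P) (D2 : X →ₗ[𝕜] Q)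
    (hD1 : ∀ x, ‖D1 x‖ ^ 2 = ‖x‖ ^ 2 - ‖T1 x‖ ^ 2) (hD2 : ∀ x, ‖D2 x‖ ^ 2 = ‖x‖ ^ 2 - ‖T2 x‖ ^ 2)
    (S : WithLp 2 (P × Q) ≃ₗᵢ[𝕜] WithLp 2 (P × Q))
    (hS : ∀ x, S (WithLp.toLp 2 (D1 (T2 x), D2 x)) = WithLp.toLp 2 (D1 x, D2 (T1 x))) :
    ∃ V1 V2 : WithLp 2 (X × lp (fun _ : ℕ => WithLp 2 (P × Q)) 2) →L[𝕜]
        WithLp 2 (X × lp (fun _ : ℕ => WithLp 2 (P × Q)) 2),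
      (∀ w, ‖V1 w‖ = ‖w‖) ∧ (∀ w, ‖V2 w‖ = ‖w‖) ∧ V1 ∘L V2 = V2 ∘L V1 ∧
      ∀ (n1 n2 : ℕ) (x : X), (WithLp.ofLp (((V1 ^ n1) * (V2 ^ n2)) (WithLp.toLp 2 (x, 0)))).1
        = ((T1 ^ n1) * (T2 ^ n2)) x := by
  let W1 := schafferIsometry (T1 : X →ₗ[𝕜] X) D1 hD1 (lpConsFst 𝕜 P Q)
  let W2 := schafferIsometry (T2 : X →ₗ[𝕜] X) D2 hD2 (lpConsSnd 𝕜 P Q)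
  let Φ := LinearIsometryEquiv.withLpProdCongr 2 (.refl 𝕜 X)
    (.lpCongrRight (p := 2) fun _ : ℕ => S.symm)
  have shift_succ : ∀ y n, (W1 (W2 y)).snd (n + 1) = y.snd n ∧ (W2 (W1 y)).snd (n + 1) = y.snd n :=
    fun y n => ⟨by ext <;> simp [W1, W2], by ext <;> simp [W1, W2]⟩
  have intertwine : ∀ z, W1 (W2 (Φ z)) = Φ (W2 (W1 z)) := by
    intro z
    ext1
    · simpa [W1, W2, Φ] using DFunLike.congr_fun hcomm z.fst
    · refine lp.ext <| funext fun n => ?_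
      cases n with
      | zero =>
        have h₁ : (W1 (W2 (Φ z))).snd 0 = WithLp.toLp 2 (D1 (T2 z.fst), D2 z.fst) := by
          ext <;> simp [W1, W2, Φ]
        have h₂ : (W2 (W1 z)).snd 0 = WithLp.toLp 2 (D1 z.fst, D2 (T1 z.fst)) := by
          ext <;> simp [W1, W2]
        rw [h₁]
        simp [Φ, h₂, ← hS]
      | succ n => simp [Φ, shift_succ]
  let V1 := (W1.comp Φ.symm.toLinearIsometry).toContinuousLinearMap
  let V2 := (Φ.toLinearIsometry.comp W2).toContinuousLinearMap
  have hV1 : Function.Semiconj WithLp.fst V1 T1 := fun z => rfl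
  have hV2 : Function.Semiconj WithLp.fst V2 T2 := fun z => rfl
  refine ⟨V1, V2, W1.comp Φ.symm.toLinearIsometry |>.norm_map,
    Φ.toLinearIsometry.comp W2 |>.norm_map, ?_, fun n1 n2 x => ?_⟩
  · ext1 z
    simp [V1, V2, ← intertwine]
  · simp only [mul_apply_eq_comp, FunLike.coe_pow_eq_iterate, WithLp.ofLp_fst,
      (hV1.iterate_right n1).eq, (hV2.iterate_right n2).eq]
    rfl

theorem unitary_from_complements_and_dilation_general
    (X : Type*) [NormedAddCommGroup X] [NormedSpace ℂ X]
    (T1 T2 : X →L[ℂ] X) (hcomm : T1 ∘L T2 = T2 ∘L T1)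
    (hT1 : ‖T1‖ ≤ 1) (hT2 : ‖T2‖ ≤ 1)
    (X1 X2 : Type*) [NormedAddCommGroup X1] [NormedSpace ℂ X1]
    [NormedAddCommGroup X2] [NormedSpace ℂ X2]
    (j1 : X ≃ₗ[ℂ] X1) (j2 : X ≃ₗ[ℂ] X2)
    (hj1 : ∀ x : X, ‖j1 x‖ = Real.sqrt (‖x‖ ^ 2 - ‖T1 x‖ ^ 2))
    (hj2 : ∀ x : X, ‖j2 x‖ = Real.sqrt (‖x‖ ^ 2 - ‖T2 x‖ ^ 2))
    (Y1 Y2 : Submodule ℂ (WithLp 2 (X1 × X2)))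
    (U : Y1 ≃ₗᵢ[ℂ] Y2)
    (hdec1 : ∀ z : WithLp 2 (X1 × X2),
      ∃! p : X × Y1,
        (WithLp.equiv 2 (X1 × X2)).symm (j1 (T2 p.1), j2 p.1)
          + (p.2 : WithLp 2 (X1 × X2)) = z)
    (hnorm1 : ∀ (x : X) (y : Y1),
      ‖(WithLp.equiv 2 (X1 × X2)).symm (j1 (T2 x), j2 x) + (y : WithLp 2 (X1 × X2))‖ ^ 2
        = ‖(WithLp.equiv 2 (X1 × X2)).symm (j1 (T2 x), j2 x)‖ ^ 2
          + ‖(y : WithLp 2 (X1 × X2))‖ ^ 2)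
    (hdec2 : ∀ z : WithLp 2 (X1 × X2),
      ∃! p : X × Y2,
        (WithLp.equiv 2 (X1 × X2)).symm (j1 p.1, j2 (T1 p.1))
          + (p.2 : WithLp 2 (X1 × X2)) = z)
    (hnorm2 : ∀ (x : X) (y : Y2),
      ‖(WithLp.equiv 2 (X1 × X2)).symm (j1 x, j2 (T1 x)) + (y : WithLp 2 (X1 × X2))‖ ^ 2
        = ‖(WithLp.equiv 2 (X1 × X2)).symm (j1 x, j2 (T1 x))‖ ^ 2
          + ‖(y : WithLp 2 (X1 × X2))‖ ^ 2) :
    ∃ S : WithLp 2 (X1 × X2) ≃ₗᵢ[ℂ] WithLp 2 (X1 × X2),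
      (∀ x : X,
        S (WithLp.toLp 2 (j1 (T2 x), j2 x) : WithLp 2 (X1 × X2))
          = (WithLp.toLp 2 (j1 x, j2 (T1 x)) : WithLp 2 (X1 × X2))) ∧
      (S '' {z : WithLp 2 (X1 × X2) | ∃ x : X, z = WithLp.toLp 2 (j1 (T2 x), j2 x)}
        = {z : WithLp 2 (X1 × X2) | ∃ x : X, z = WithLp.toLp 2 (j1 x, j2 (T1 x))}) ∧
      (∃ V1 V2 : WithLp 2 (X × lp (fun _ : ℕ => WithLp 2 (X1 × X2)) 2) →L[ℂ]
          WithLp 2 (X × lp (fun _ : ℕ => WithLp 2 (X1 × X2)) 2),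
        (∀ w, ‖V1 w‖ = ‖w‖) ∧ (∀ w, ‖V2 w‖ = ‖w‖) ∧
        V1 ∘L V2 = V2 ∘L V1 ∧
        (∀ (n1 n2 : ℕ) (x : X),
          (WithLp.ofLp (((V1 ^ n1) * (V2 ^ n2))
              (WithLp.toLp 2 (x, 0) : WithLp 2 (X × lp (fun _ : ℕ => WithLp 2 (X1 × X2)) 2)))).1
            = ((T1 ^ n1) * (T2 ^ n2)) x)) := by
  have hD1 : ∀ x, ‖j1 x‖ ^ 2 = ‖x‖ ^ 2 - ‖T1 x‖ ^ 2 := fun x => by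
    rw [hj1, T1.sq_sqrt_norm_sq_sub_norm_apply_sq hT1]
  have hD2 : ∀ x, ‖j2 x‖ ^ 2 = ‖x‖ ^ 2 - ‖T2 x‖ ^ 2 := fun x => by
    rw [hj2, T2.sq_sqrt_norm_sq_sub_norm_apply_sq hT2]
  let toLpₗ := (WithLp.linearEquiv 2 ℂ (X1 × X2)).symm.toLinearMap
  obtain ⟨S, hS⟩ := exists_linearIsometryEquiv_apply_eq_of_twoSum
    (toLpₗ ∘ₗ (j1.toLinearMap ∘ₗ T2.toLinearMap).prod j2.toLinearMap)
    (toLpₗ ∘ₗ j1.toLinearMap.prod (j2.toLinearMap ∘ₗ T1.toLinearMap))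
    (norm_toLp_defect_comm T1 T2 hcomm j1.toLinearMap j2.toLinearMap hD1 hD2) U
    hdec1 hnorm1 hdec2 hnorm2
  refine ⟨S, hS, ?_, exists_commuting_isometric_dilation T1 T2 hcomm j1.toLinearMap
    j2.toLinearMap hD1 hD2 S hS⟩
  ext z
  constructor
  · rintro ⟨_, ⟨x, rfl⟩, rfl⟩
    exact ⟨x, hS x⟩
  · rintro ⟨x, rfl⟩
    exact ⟨_, ⟨x, rfl⟩, hS x⟩

/-- (Theorem 3.1, condition (ii), via Lemma 2.2 (iii)). Let `(T1, T2)` be commuting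
contractions on a complex normed space `X` such that each `A_{Ti}` defines a norm,
realized by normed spaces `Xi` via linear bijections `ji`. If there are subspaces
`Y1, Y2` of `X1 ⊕₂ X2`, a surjective linear isometry between them, and internal direct
2-sum decompositions `M̂1 ⊕₂ Y1 = X1 ⊕₂ X2 = M̂2 ⊕₂ Y2` where
`M̂1 = {(j1 (T2 x), j2 x)}` and `M̂2 = {(j1 x, j2 (T1 x))}`, then there is a surjective
linear isometry `S` of `X1 ⊕₂ X2` with `S (M̂1) = M̂2` and
`S (j1 (T2 x), j2 x) = (j1 x, j2 (T1 x))`; consequently `(T1, T2)` dilates to a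
commuting pair of isometries on `X ⊕₂ ℓ²(ℕ, X1 ⊕₂ X2)`. -/
theorem unitary_from_complements_and_dilation
    (X : Type*) [NormedAddCommGroup X] [NormedSpace ℂ X]
    (T1 T2 : X →L[ℂ] X) (hcomm : T1 ∘L T2 = T2 ∘L T1)
    (hT1 : ‖T1‖ ≤ 1) (hT2 : ‖T2‖ ≤ 1)
    (hdef1 : ∀ x : X, Real.sqrt (‖x‖ ^ 2 - ‖T1 x‖ ^ 2) = 0 → x = 0)
    (hdef2 : ∀ x : X, Real.sqrt (‖x‖ ^ 2 - ‖T2 x‖ ^ 2) = 0 → x = 0)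
    (htri1 : ∀ x y : X,
      Real.sqrt (‖x + y‖ ^ 2 - ‖T1 (x + y)‖ ^ 2)
        ≤ Real.sqrt (‖x‖ ^ 2 - ‖T1 x‖ ^ 2) + Real.sqrt (‖y‖ ^ 2 - ‖T1 y‖ ^ 2))
    (htri2 : ∀ x y : X,
      Real.sqrt (‖x + y‖ ^ 2 - ‖T2 (x + y)‖ ^ 2)
        ≤ Real.sqrt (‖x‖ ^ 2 - ‖T2 x‖ ^ 2) + Real.sqrt (‖y‖ ^ 2 - ‖T2 y‖ ^ 2))
    (X1 X2 : Type*) [NormedAddCommGroup X1] [NormedSpace ℂ X1]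
    [NormedAddCommGroup X2] [NormedSpace ℂ X2]
    (j1 : X ≃ₗ[ℂ] X1) (j2 : X ≃ₗ[ℂ] X2)
    (hj1 : ∀ x : X, ‖j1 x‖ = Real.sqrt (‖x‖ ^ 2 - ‖T1 x‖ ^ 2))
    (hj2 : ∀ x : X, ‖j2 x‖ = Real.sqrt (‖x‖ ^ 2 - ‖T2 x‖ ^ 2))
    (Y1 Y2 : Submodule ℂ (WithLp 2 (X1 × X2)))
    (U : Y1 ≃ₗᵢ[ℂ] Y2)
    (hdec1 : ∀ z : WithLp 2 (X1 × X2),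
      ∃! p : X × Y1,
        (WithLp.equiv 2 (X1 × X2)).symm (j1 (T2 p.1), j2 p.1)
          + (p.2 : WithLp 2 (X1 × X2)) = z)
    (hnorm1 : ∀ (x : X) (y : Y1),
      ‖(WithLp.equiv 2 (X1 × X2)).symm (j1 (T2 x), j2 x) + (y : WithLp 2 (X1 × X2))‖ ^ 2
        = ‖(WithLp.equiv 2 (X1 × X2)).symm (j1 (T2 x), j2 x)‖ ^ 2
          + ‖(y : WithLp 2 (X1 × X2))‖ ^ 2)
    (hdec2 : ∀ z : WithLp 2 (X1 × X2),
      ∃! p : X × Y2,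
        (WithLp.equiv 2 (X1 × X2)).symm (j1 p.1, j2 (T1 p.1))
          + (p.2 : WithLp 2 (X1 × X2)) = z)
    (hnorm2 : ∀ (x : X) (y : Y2),
      ‖(WithLp.equiv 2 (X1 × X2)).symm (j1 x, j2 (T1 x)) + (y : WithLp 2 (X1 × X2))‖ ^ 2
        = ‖(WithLp.equiv 2 (X1 × X2)).symm (j1 x, j2 (T1 x))‖ ^ 2
          + ‖(y : WithLp 2 (X1 × X2))‖ ^ 2) :
    ∃ S : WithLp 2 (X1 × X2) ≃ₗᵢ[ℂ] WithLp 2 (X1 × X2),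
      (∀ x : X,
        S (WithLp.toLp 2 (j1 (T2 x), j2 x) : WithLp 2 (X1 × X2))
          = (WithLp.toLp 2 (j1 x, j2 (T1 x)) : WithLp 2 (X1 × X2))) ∧
      (S '' {z : WithLp 2 (X1 × X2) | ∃ x : X, z = WithLp.toLp 2 (j1 (T2 x), j2 x)}
        = {z : WithLp 2 (X1 × X2) | ∃ x : X, z = WithLp.toLp 2 (j1 x, j2 (T1 x))}) ∧
      (∃ V1 V2 : WithLp 2 (X × lp (fun _ : ℕ => WithLp 2 (X1 × X2)) 2) →L[ℂ]
          WithLp 2 (X × lp (fun _ : ℕ => WithLp 2 (X1 × X2)) 2),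
        (∀ w, ‖V1 w‖ = ‖w‖) ∧ (∀ w, ‖V2 w‖ = ‖w‖) ∧
        V1 ∘L V2 = V2 ∘L V1 ∧
        (∀ (n1 n2 : ℕ) (x : X),
          (WithLp.ofLp (((V1 ^ n1) * (V2 ^ n2))
              (WithLp.toLp 2 (x, 0) : WithLp 2 (X × lp (fun _ : ℕ => WithLp 2 (X1 × X2)) 2)))).1
            = ((T1 ^ n1) * (T2 ^ n2)) x)) :=
  unitary_from_complements_and_dilation_general X T1 T2 hcomm hT1 hT2 X1 X2 j1 j2 hj1 hj2 Y1 Y2 U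
    hdec1 hnorm1 hdec2 hnorm2
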